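/- arXiv:2402.11381 — 3 statements merged into one kernel-verified Lean document; each statement's English description precedes it below -/
import Mathlib

section
/- Let H_1, H_2, H_3 be bipartite graphs each properly 2-colored with black and white, such that for each i ≠ j there is a perfect matching between V(H_i) and V(H_j) using edges of a bipartite supergraph. If H_1 has exactly one more black vertex than white vertices, then it is impossible for the resulting welded graph to be bipartite. -/
open Finset

/-- A paired `k`-PDPC of `G` with prescribed endpoints `s i`, `t i`. -/
def IsPDPC {V : Type} [Fintype V] (G : SimpleGraph V) {k : ℕ} (s t : Fin k → V) : Prop :=
  ∃ P : (i : Fin k) → G.Walk (s i) (t i),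
    (∀ i, (P i).IsPath) ∧
    (∀ i j, i ≠ j → ∀ v, v ∈ (P i).support → v ∉ (P j).support) ∧
    (∀ v : V, ∃ i, v ∈ (P i).support)

/-- `V1, V2` form a bipartition of `G` into partite sets. -/
def IsBipartition {V : Type} (G : SimpleGraph V) (V1 V2 : Finset V) : Prop :=
  (∀ v, v ∈ V1 ∨ v ∈ V2) ∧ (∀ v, ¬(v ∈ V1 ∧ v ∈ V2)) ∧
  (∀ ⦃u v⦄, G.Adj u v → (u ∈ V1 ∧ v ∈ V2) ∨ (u ∈ V2 ∧ v ∈ V1))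

/-- `G` on `Fin ℓ × W` is a weld of the graphs `Gs i`: each layer `i` is a copy of `Gs i`
and between any two distinct layers the edges of `G` form a perfect matching. -/
def IsWeld {ℓ : ℕ} {W : Type} (G : SimpleGraph (Fin ℓ × W)) (Gs : Fin ℓ → SimpleGraph W) : Prop :=
  (∀ i u v, G.Adj (i, u) (i, v) ↔ (Gs i).Adj u v) ∧
  (∀ i j, i ≠ j → ∃ f : W ≃ W, ∀ u v, G.Adj (i, u) (j, v) ↔ v = f u)

theorem stmt5 {W : Type} [Fintype W] [DecidableEq W]
    (Hs : Fin 3 → SimpleGraph W) (c : Fin 3 → W → Bool)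
    (hproper : ∀ i u v, (Hs i).Adj u v → c i u ≠ c i v)
    (h1 : (Finset.univ.filter fun w => c 0 w = true).card
        = (Finset.univ.filter fun w => c 0 w = false).card + 1)
    (G : SimpleGraph (Fin 3 × W)) (hweld : IsWeld G Hs) :
    ¬ ∃ V1 V2 : Finset (Fin 3 × W), IsBipartition G V1 V2 := by
  rintro ⟨V1, V2, hcov, hdisj, hadj⟩
  obtain ⟨hlayer, hmatch⟩ := hweld
  set A : Fin 3 → Finset W := fun i => univ.filter (fun w => (i, w) ∈ V1) with hA
  set B : Fin 3 → Finset W := fun i => univ.filter (fun w => (i, w) ∈ V2) with hB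
  have hsum : ∀ i, (A i).card + (B i).card = Fintype.card W := by
    intro i
    rw [← Finset.card_union_of_disjoint]
    · rw [← Finset.card_univ]
      congr 1
      ext w
      simp only [hA, hB, Finset.mem_union, Finset.mem_filter, Finset.mem_univ, true_and,
        iff_true]
      exact hcov (i, w)
    · rw [Finset.disjoint_left]
      intro w hw1 hw2
      simp only [hA, hB, Finset.mem_filter, Finset.mem_univ, true_and] at hw1 hw2
      exact hdisj (i, w) ⟨hw1, hw2⟩
  have key : ∀ i j, i ≠ j → (A i).card = (B j).card := by
    intro i j hij
    obtain ⟨f, hf⟩ := hmatch i j hij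
    apply Finset.card_bij (fun u _ => f u)
    · intro u hu
      simp only [hA, Finset.mem_filter, Finset.mem_univ, true_and] at hu
      simp only [hB, Finset.mem_filter, Finset.mem_univ, true_and]
      have hadjuv : G.Adj (i, u) (j, f u) := (hf u (f u)).mpr rfl
      rcases hadj hadjuv with ⟨_, h2⟩ | ⟨h1, _⟩
      · exact h2
      · exact absurd ⟨hu, h1⟩ (hdisj _)
    · intro a _ b _ h
      exact f.injective h
    · intro v hv
      simp only [hB, Finset.mem_filter, Finset.mem_univ, true_and] at hv
      refine ⟨f.symm v, ?_, by simp⟩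
      simp only [hA, Finset.mem_filter, Finset.mem_univ, true_and]
      have hadjuv : G.Adj (i, f.symm v) (j, v) := (hf _ _).mpr (by simp)
      rcases hadj hadjuv with ⟨h1, _⟩ | ⟨_, h2⟩
      · exact h1
      · exact absurd ⟨h2, hv⟩ (hdisj _)
  have hW : Fintype.card W = 2 * (univ.filter fun w => c 0 w = false).card + 1 := by
    have h := Finset.card_filter_add_card_filter_not (s := (univ : Finset W))
      (p := fun w => c 0 w = true)
    have heq : (univ.filter fun w => ¬ c 0 w = true) = (univ.filter fun w => c 0 w = false) := by
      ext w; simp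
    rw [heq, Finset.card_univ] at h
    omega
  have e1 : (A 0).card = (B 2).card := key 0 2 (by decide)
  have e2 : (A 1).card = (B 2).card := key 1 2 (by decide)
  have e3 : (A 1).card = (B 0).card := key 1 0 (by decide)
  have h0 := hsum 0
  omega
end

section
/- Let G_1,...,G_ℓ be equitable Hamiltonian-laceable graphs with the same number of vertices, let G be a bipartite weld of G_1,...,G_ℓ, and let H be the subgraph of G induced by G_{σ_1},...,G_{σ_j} (the weld of these copies inside G) for some subset {σ_1,...,σ_j} ⊆ [ℓ] with j ≥ 1. If H admits a k-PDPC with endpoints S ∪ T ⊆ V(H), then G admits a k-PDPC with the same endpoints S ∪ T. -/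
open Finset

/-- `p` is a Hamiltonian path. -/
def IsHamPath {V : Type} {G : SimpleGraph V} {u v : V} (p : G.Walk u v) : Prop :=
  p.IsPath ∧ ∀ w : V, w ∈ p.support

/-- `G` is Hamiltonian-connected. -/
def HamConnected {V : Type} (G : SimpleGraph V) : Prop :=
  ∀ u v : V, u ≠ v → ∃ p : G.Walk u v, IsHamPath p

/-- `G` is Hamiltonian-laceable with partite sets `V1, V2`. -/
def HamLaceableOn {V : Type} (G : SimpleGraph V) (V1 V2 : Finset V) : Prop :=
  IsBipartition G V1 V2 ∧ ∀ u ∈ V1, ∀ v ∈ V2, ∃ p : G.Walk u v, IsHamPath p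

/-- `G` is Hamiltonian-laceable. -/
def HamLaceable {V : Type} (G : SimpleGraph V) : Prop :=
  ∃ V1 V2 : Finset V, HamLaceableOn G V1 V2

lemma bip_parity {V : Type} {G : SimpleGraph V} {V1 V2 : Finset V}
    (h : IsBipartition G V1 V2) {x y : V} (p : G.Walk x y) :
    ((x ∈ V1) ↔ (y ∈ V1)) ↔ Even p.length := by
  induction p with
  | nil => simp
  | @cons x z y h' q ih =>
    have hxz : ¬ (x ∈ V1 ↔ z ∈ V1) := by
      rcases h.2.2 h' with ⟨hx, hz⟩ | ⟨hx, hz⟩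
      · have := h.2.1 z; tauto
      · have := h.2.1 x; tauto
    simp only [SimpleGraph.Walk.length_cons, Nat.even_add_one, ← ih]
    tauto

lemma lace_walk {W : Type} [DecidableEq W] {H : SimpleGraph W} {A B : Finset W}
    (hl : HamLaceableOn H A B) {a b : W} (ha : a ∈ A) (hb : b ∈ B) (x y : W) :
    Nonempty (H.Walk x y) := by
  obtain ⟨p, hp⟩ := hl.2 a ha b hb
  exact ⟨((p.takeUntil x (hp.2 x)).reverse).append (p.takeUntil y (hp.2 y))⟩

lemma opp_ham {ℓ : ℕ} {W : Type} [Fintype W] [DecidableEq W] {Gs : Fin ℓ → SimpleGraph W}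
    {G : SimpleGraph (Fin ℓ × W)}
    (hweld1 : ∀ i u v, G.Adj (i, u) (i, v) ↔ (Gs i).Adj u v)
    {V1 V2 : Finset (Fin ℓ × W)} (hbip : IsBipartition G V1 V2)
    {j : Fin ℓ} {A B : Finset W} (hl : HamLaceableOn (Gs j) A B) (hcard : A.card = B.card)
    {x y : W} (hopp : ¬ (((j, x) ∈ V1) ↔ ((j, y) ∈ V1))) :
    ∃ q : (Gs j).Walk x y, IsHamPath q := by
  have hA : A.Nonempty := by
    rcases A.eq_empty_or_nonempty with hA | hA
    · exfalso
      have hB : B = ∅ := Finset.card_eq_zero.mp (by rw [← hcard, hA]; simp)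
      rcases hl.1.1 x with h | h <;> simp_all
    · exact hA
  have hB : B.Nonempty := Finset.card_pos.mp (hcard ▸ Finset.card_pos.mpr hA)
  obtain ⟨p0⟩ := lace_walk hl hA.choose_spec hB.choose_spec x y
  let φ : Gs j →g G := ⟨fun w => (j, w), fun h' => (hweld1 j _ _).mpr h'⟩
  have hodd : ¬ Even p0.length := by
    intro he
    have h2 := (bip_parity hbip (p0.map φ)).mpr (by rwa [SimpleGraph.Walk.length_map])
    exact hopp h2
  have hAB : ¬ ((x ∈ A) ↔ (y ∈ A)) := fun hxy => hodd ((bip_parity hl.1 p0).mp hxy)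
  rcases hl.1.1 x with hx | hx <;> rcases hl.1.1 y with hy | hy
  · exact absurd (by tauto) hAB
  · exact hl.2 x hx y hy
  · obtain ⟨q0, hq0⟩ := hl.2 y hy x hx
    exact ⟨q0.reverse, hq0.1.reverse, fun w => by
      rw [SimpleGraph.Walk.support_reverse, List.mem_reverse]; exact hq0.2 w⟩
  · have := hl.1.2.1 x; have := hl.1.2.1 y; exact absurd (by tauto) hAB

def CoverP {ℓ k : ℕ} {W : Type} (G : SimpleGraph (Fin ℓ × W))
    (s t : Fin k → Fin ℓ × W) (τ : Finset (Fin ℓ)) : Prop :=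
  ∃ P : (i : Fin k) → G.Walk (s i) (t i),
    (∀ i, (P i).IsPath) ∧
    (∀ i j, i ≠ j → ∀ v, v ∈ (P i).support → v ∉ (P j).support) ∧
    (∀ v, (∃ i, v ∈ (P i).support) ↔ v.1 ∈ τ)

lemma cover_step {ℓ k : ℕ} {W : Type} [Fintype W] [DecidableEq W]
    {Gs : Fin ℓ → SimpleGraph W}
    (hlace : ∀ i, ∃ A B : Finset W, HamLaceableOn (Gs i) A B ∧ A.card = B.card)
    {G : SimpleGraph (Fin ℓ × W)} (hweld : IsWeld G Gs)
    {V1 V2 : Finset (Fin ℓ × W)} (hbip : IsBipartition G V1 V2)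
    {s t : Fin k → Fin ℓ × W} (hst : ∀ i j, s i ≠ t j) (i₀ : Fin k)
    {τ : Finset (Fin ℓ)} {j : Fin ℓ} (hj : j ∉ τ)
    (h : CoverP G s t τ) : CoverP G s t (insert j τ) := by
  obtain ⟨P, hpath, hdisj, hcov⟩ := h
  obtain ⟨w, h1, q, hPq⟩ := SimpleGraph.Walk.exists_eq_cons_of_ne (hst i₀ i₀) (P i₀)
  have hsupp : ∀ i v, v ∈ (P i).support → v.1 ∈ τ := fun i v hv => (hcov v).mp ⟨i, hv⟩
  have ha : (s i₀).1 ∈ τ := hsupp i₀ _ ((P i₀).start_mem_support)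
  have hb : w.1 ∈ τ := hsupp i₀ w (by rw [hPq]; simp)
  obtain ⟨f, hf⟩ := hweld.2 (s i₀).1 j (fun hE => hj (hE ▸ ha))
  obtain ⟨g, hg⟩ := hweld.2 w.1 j (fun hE => hj (hE ▸ hb))
  have h1a : G.Adj (s i₀) (j, f (s i₀).2) := by
    have := (hf (s i₀).2 (f (s i₀).2)).mpr rfl
    simpa using this
  have h2a : G.Adj w (j, g w.2) := by
    have := (hg w.2 (g w.2)).mpr rfl
    simpa using this
  have hopp : ¬ (((j, f (s i₀).2) ∈ V1) ↔ ((j, g w.2) ∈ V1)) := by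
    have e1 := hbip.2.2 h1
    have e2 := hbip.2.2 h1a
    have e3 := hbip.2.2 h2a
    have d1 := hbip.2.1 (s i₀); have d2 := hbip.2.1 w
    have d3 := hbip.2.1 (j, f (s i₀).2); have d4 := hbip.2.1 (j, g w.2)
    rcases e1 with ⟨hs1, hw2⟩ | ⟨hs2, hw1⟩
    · rcases e2 with ⟨_, hu2⟩ | ⟨hs2', _⟩
      · rcases e3 with ⟨hw1', _⟩ | ⟨_, hv1⟩
        · exact absurd ⟨hw1', hw2⟩ d2
        · exact fun hif => d3 ⟨hif.mpr hv1, hu2⟩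
      · exact absurd ⟨hs1, hs2'⟩ d1
    · rcases e2 with ⟨hs1', _⟩ | ⟨_, hu1⟩
      · exact absurd ⟨hs1', hs2⟩ d1
      · rcases e3 with ⟨_, hv2⟩ | ⟨hw2', _⟩
        · exact fun hif => d4 ⟨hif.mp hu1, hv2⟩
        · exact absurd ⟨hw1, hw2'⟩ d2
  obtain ⟨A, B, hl, hcard⟩ := hlace j
  obtain ⟨Q, hQ⟩ := opp_ham hweld.1 hbip hl hcard hopp
  let φ : Gs j →g G := ⟨fun w => (j, w), fun h' => (hweld.1 j _ _).mpr h'⟩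
  let Q' := Q.map φ
  have hQ'path : Q'.IsPath :=
    SimpleGraph.Walk.map_isPath_of_injective (fun a b hab => congrArg Prod.snd hab) hQ.1
  have hQ'mem : ∀ v : Fin ℓ × W, v ∈ Q'.support ↔ v.1 = j := by
    rintro ⟨v1, v2⟩
    constructor
    · intro hv
      rw [SimpleGraph.Walk.support_map] at hv
      obtain ⟨u, _, hu⟩ := List.mem_map.mp hv
      exact (congrArg Prod.fst hu).symm
    · intro hv
      cases hv
      rw [SimpleGraph.Walk.support_map]
      exact List.mem_map.mpr ⟨v2, hQ.2 v2, rfl⟩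
  let NW : G.Walk (s i₀) (t i₀) :=
    SimpleGraph.Walk.cons h1a (Q'.append (SimpleGraph.Walk.cons h2a.symm q))
  have hNWsupp : NW.support = s i₀ :: (Q'.support ++ q.support) := by
    simp [NW, SimpleGraph.Walk.support_append]
  have hPsupp : (P i₀).support = s i₀ :: q.support := by rw [hPq]; simp
  have hNWmem : ∀ v, v ∈ NW.support ↔ v ∈ (P i₀).support ∨ v.1 = j := by
    intro v
    rw [hNWsupp, hPsupp]
    simp only [List.mem_cons, List.mem_append, hQ'mem]
    tauto
  have hq_layer : ∀ v ∈ q.support, v.1 ∈ τ := fun v hv =>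
    hsupp i₀ v (by rw [hPsupp]; exact List.mem_cons_of_mem _ hv)
  have hNWpath : NW.IsPath := by
    rw [SimpleGraph.Walk.isPath_def, hNWsupp]
    have hqnd : (s i₀ :: q.support).Nodup := by
      rw [← hPsupp]; exact (hpath i₀).support_nodup
    rw [List.nodup_cons] at hqnd ⊢
    refine ⟨?_, ?_⟩
    · intro hmem
      rcases List.mem_append.mp hmem with hmem | hmem
      · exact hj (((hQ'mem _).mp hmem) ▸ ha)
      · exact hqnd.1 hmem
    · refine List.Nodup.append hQ'path.support_nodup hqnd.2 ?_
      intro v hv1 hv2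
      exact hj (((hQ'mem v).mp hv1) ▸ hq_layer v hv2)
  let P' := Function.update P i₀ NW
  have key : ∀ i v, v ∈ (P' i).support → v ∈ (P i).support ∨ (i = i₀ ∧ v.1 = j) := by
    intro i v hv
    rcases eq_or_ne i i₀ with rfl | hi
    · rw [show P' i = NW from Function.update_self i NW P] at hv
      rcases (hNWmem v).mp hv with h' | h'
      · exact Or.inl h'
      · exact Or.inr ⟨rfl, h'⟩
    · rw [show P' i = P i from Function.update_of_ne hi NW P] at hv
      exact Or.inl hv
  refine ⟨P', ?_, ?_, ?_⟩
  · intro i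
    rcases eq_or_ne i i₀ with rfl | hi
    · rw [show P' i = NW from Function.update_self i NW P]; exact hNWpath
    · rw [show P' i = P i from Function.update_of_ne hi NW P]; exact hpath i
  · intro i i' hii' v hv hv'
    rcases key i v hv with hv1 | ⟨rfl, hv1⟩ <;> rcases key i' v hv' with hv2 | ⟨hEq, hv2⟩
    · exact hdisj i i' hii' v hv1 hv2
    · exact hj (hv2 ▸ hsupp i v hv1)
    · exact hj (hv1 ▸ hsupp i' v hv2)
    · exact hii' hEq.symm
  · intro v
    constructor
    · rintro ⟨i, hv⟩
      rcases key i v hv with hv1 | ⟨_, hv1⟩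
      · exact Finset.mem_insert_of_mem (hsupp i v hv1)
      · exact hv1 ▸ Finset.mem_insert_self _ _
    · intro hv
      rcases Finset.mem_insert.mp hv with hv | hv
      · refine ⟨i₀, ?_⟩
        rw [show P' i₀ = NW from Function.update_self i₀ NW P]
        exact (hNWmem v).mpr (Or.inr hv)
      · obtain ⟨i, hi⟩ := (hcov v).mpr hv
        rcases eq_or_ne i i₀ with rfl | hne
        · exact ⟨i, by
            rw [show P' i = NW from Function.update_self i NW P]
            exact (hNWmem v).mpr (Or.inl hi)⟩
        · exact ⟨i, by rw [show P' i = P i from Function.update_of_ne hne NW P]; exact hi⟩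

theorem stmt8 {ℓ : ℕ} {W : Type} [Fintype W] [DecidableEq W]
    (Gs : Fin ℓ → SimpleGraph W)
    (hlace : ∀ i, ∃ A B : Finset W, HamLaceableOn (Gs i) A B ∧ A.card = B.card)
    (G : SimpleGraph (Fin ℓ × W)) (hweld : IsWeld G Gs)
    (hGbip : ∃ V1 V2 : Finset (Fin ℓ × W), IsBipartition G V1 V2)
    (σ : Finset (Fin ℓ)) (hσ : σ.Nonempty)
    (k : ℕ) (s t : Fin k → ↥{p : Fin ℓ × W | p.1 ∈ σ})
    (hs : Function.Injective s) (ht : Function.Injective t)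
    (hst : ∀ i j, s i ≠ t j)
    (hH : IsPDPC (G.induce {p : Fin ℓ × W | p.1 ∈ σ}) s t) :
    IsPDPC G (fun i => (s i : Fin ℓ × W)) (fun i => (t i : Fin ℓ × W)) := by
  classical
  obtain ⟨V1, V2, hbip⟩ := hGbip
  by_cases hW : IsEmpty (Fin ℓ × W)
  · exact ⟨fun i => (hW.false ((s i : Fin ℓ × W))).elim,
      fun i => (hW.false ((s i : Fin ℓ × W))).elim,
      fun i j _ v _ => (hW.false v).elim, fun v => (hW.false v).elim⟩
  · rw [not_isEmpty_iff] at hW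
    obtain ⟨v₀⟩ := hW
    obtain ⟨PH, hHpath, hHdisj, hHcov⟩ := hH
    obtain ⟨j₀, hj₀⟩ := hσ
    obtain ⟨i₀, _⟩ := hHcov ⟨(j₀, v₀.2),
      show (j₀, v₀.2) ∈ {p : Fin ℓ × W | p.1 ∈ σ} from hj₀⟩
    have hst' : ∀ i j, ((s i : Fin ℓ × W)) ≠ ((t j : Fin ℓ × W)) :=
      fun i j h => hst i j (Subtype.coe_injective h)
    have base : CoverP G (fun i => (s i : Fin ℓ × W)) (fun i => (t i : Fin ℓ × W)) σ := by
      let φ : (G.induce {p : Fin ℓ × W | p.1 ∈ σ}) →g G := ⟨Subtype.val, fun h' => h'⟩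
      refine ⟨fun i => (PH i).map φ, ?_, ?_, ?_⟩
      · exact fun i => SimpleGraph.Walk.map_isPath_of_injective Subtype.val_injective (hHpath i)
      · intro i j hij v hv hv'
        rw [SimpleGraph.Walk.support_map] at hv hv'
        obtain ⟨u, hu, rfl⟩ := List.mem_map.mp hv
        obtain ⟨u', hu', hval⟩ := List.mem_map.mp hv'
        cases Subtype.val_injective hval
        exact hHdisj i j hij u hu hu'
      · intro v
        constructor
        · rintro ⟨i, hv⟩
          rw [SimpleGraph.Walk.support_map] at hv
          obtain ⟨u, _, rfl⟩ := List.mem_map.mp hv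
          exact u.2
        · intro hv
          obtain ⟨i, hi⟩ := hHcov ⟨v, hv⟩
          exact ⟨i, by rw [SimpleGraph.Walk.support_map]; exact List.mem_map.mpr ⟨_, hi, rfl⟩⟩
    have main : ∀ ρ : Finset (Fin ℓ),
        CoverP G (fun i => (s i : Fin ℓ × W)) (fun i => (t i : Fin ℓ × W)) (σ ∪ ρ) := by
      intro ρ
      induction ρ using Finset.induction_on with
      | empty => simpa using base
      | @insert a ρ' haρ ih =>
        by_cases haσ : a ∈ σ ∪ ρ'
        · rwa [show σ ∪ insert a ρ' = σ ∪ ρ' from by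
            rw [Finset.union_insert, Finset.insert_eq_self.mpr haσ]]
        · rw [show σ ∪ insert a ρ' = insert a (σ ∪ ρ') from Finset.union_insert ..]
          exact cover_step hlace hweld hbip hst' i₀ haσ ih
    obtain ⟨P, h1, h2, h3⟩ := main Finset.univ
    exact ⟨P, h1, h2, fun v => (h3 v).mpr (Finset.mem_union_right _ (Finset.mem_univ _))⟩
end

section
/- Let G_1 and G_2 be equitable Hamiltonian-laceable bipartite graphs with the same number of vertices, and let G be a bipartite weld of G_1 and G_2. Then G is Hamiltonian-laceable. -/
open Finset

/-! Each layer `Gs i` is Hamiltonian-laceable with two nonempty sides, hence connected, so the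
bipartition of `G` restricts on it to its own bipartition up to swapping the sides: two vertices of
one layer with opposite colours in `G` are joined by a Hamiltonian path of that layer. For ends in
different layers, run through the first layer to a vertex of the opposite colour, cross the
matching, and run through the second layer. For ends `a`, `b` in one layer, take a Hamiltonian path
`a c ⋯ b` of that layer and replace its first edge by a detour: across the matching from `a`, a
Hamiltonian path of the other layer, and back across the matching to `c`. -/

open SimpleGraph

theorem Fin.two_eq_or_eq_of_ne {i j : Fin 2} (hij : i ≠ j) (m : Fin 2) : m = i ∨ m = j := by
  revert i j m
  decide

namespace SimpleGraph.Walk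

variable {V : Type} {H : SimpleGraph V}

theorem even_length_iff_of_adj {P : V → Prop} (hP : ∀ ⦃a b⦄, H.Adj a b → (P a ↔ ¬P b)) :
    ∀ {x y : V} (p : H.Walk x y), Even p.length ↔ (P x ↔ P y)
  | _, _, nil => by simp
  | _, _, cons h q => by
    rw [length_cons, Nat.even_add_one, q.even_length_iff_of_adj hP]
    have := hP h
    tauto

theorem isPath_append_cons {u x y v : V} {p : H.Walk u x} {q : H.Walk y v} (hp : p.IsPath)
    (hq : q.IsPath) (h : H.Adj x y) (hdisj : ∀ w ∈ p.support, w ∉ q.support) :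
    (p.append (cons h q)).IsPath := by
  rw [isPath_def, support_append, support_cons, List.tail_cons, List.nodup_append]
  exact ⟨hp.support_nodup, hq.support_nodup, fun a ha b hb hab => hdisj a ha (hab ▸ hb)⟩

theorem preconnected_of_forall_mem_support {u v : V} (p : H.Walk u v)
    (hp : ∀ w, w ∈ p.support) : H.Preconnected := by
  classical
  have hu : ∀ w, H.Reachable u w := fun w => ⟨p.takeUntil w (hp w)⟩
  exact fun a b => (hu a).symm.trans (hu b)

end SimpleGraph.Walk

theorem SimpleGraph.Preconnected.iff_iff_of_adj {V : Type} {H : SimpleGraph V}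
    (hH : H.Preconnected) {P Q : V → Prop} (hP : ∀ ⦃a b⦄, H.Adj a b → (P a ↔ ¬P b))
    (hQ : ∀ ⦃a b⦄, H.Adj a b → (Q a ↔ ¬Q b)) (x y : V) : (P x ↔ P y) ↔ (Q x ↔ Q y) := by
  obtain ⟨p⟩ := hH x y
  rw [← p.even_length_iff_of_adj hP, p.even_length_iff_of_adj hQ]

theorem IsHamPath.reverse {V : Type} {H : SimpleGraph V} {u v : V} {p : H.Walk u v}
    (hp : IsHamPath p) : IsHamPath p.reverse :=
  ⟨hp.1.reverse, fun w => by simpa using hp.2 w⟩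

namespace IsBipartition

variable {V : Type} {H : SimpleGraph V} {A B : Finset V}

theorem mem_right_iff (hb : IsBipartition H A B) {v : V} : v ∈ B ↔ v ∉ A :=
  ⟨fun hB hA => hb.2.1 v ⟨hA, hB⟩, (hb.1 v).resolve_left⟩

theorem mem_left_iff_of_adj (hb : IsBipartition H A B) {a b : V} (h : H.Adj a b) :
    a ∈ A ↔ b ∉ A := by
  have ha := hb.mem_right_iff (v := a)
  have hb' := hb.mem_right_iff (v := b)
  rcases hb.2.2 h with ⟨_, _⟩ | ⟨_, _⟩ <;> tauto

end IsBipartition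

namespace HamLaceableOn

variable {V : Type} {H : SimpleGraph V} {A B : Finset V}

theorem nonempty_of_card_eq [Nonempty V] (hH : HamLaceableOn H A B) (hcard : #A = #B) :
    A.Nonempty ∧ B.Nonempty := by
  obtain ⟨w⟩ := ‹Nonempty V›
  have hB : B.Nonempty := by
    rcases hH.1.1 w with hw | hw
    · rw [← card_pos, ← hcard]
      exact card_pos.2 ⟨w, hw⟩
    · exact ⟨w, hw⟩
  exact ⟨by rwa [← card_pos, hcard, card_pos], hB⟩

theorem preconnected (hH : HamLaceableOn H A B) (hA : A.Nonempty) (hB : B.Nonempty) :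
    H.Preconnected := by
  obtain ⟨a, ha⟩ := hA
  obtain ⟨b, hb⟩ := hB
  obtain ⟨p, hp⟩ := hH.2 a ha b hb
  exact p.preconnected_of_forall_mem_support hp.2

variable (hH : HamLaceableOn H A B) (hA : A.Nonempty) (hB : B.Nonempty) {P : V → Prop}
  (hP : ∀ ⦃a b⦄, H.Adj a b → (P a ↔ ¬P b))
include hH hA hB hP

theorem iff_iff_mem_iff_mem (x y : V) : (P x ↔ P y) ↔ (x ∈ A ↔ y ∈ A) :=
  (hH.preconnected hA hB).iff_iff_of_adj hP (fun _ _ => hH.1.mem_left_iff_of_adj) x y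

theorem exists_isHamPath_of_not_iff {x y : V} (hxy : ¬(P x ↔ P y)) :
    ∃ p : H.Walk x y, IsHamPath p := by
  rw [hH.iff_iff_mem_iff_mem hA hB hP] at hxy
  by_cases hx : x ∈ A
  · exact hH.2 x hx y (hH.1.mem_right_iff.2 fun hy => hxy (iff_of_true hx hy))
  · obtain ⟨p, hp⟩ := hH.2 y (by tauto) x (hH.1.mem_right_iff.2 hx)
    exact ⟨p.reverse, hp.reverse⟩

theorem exists_not_iff (x : V) : ∃ y, ¬(P x ↔ P y) := by
  simp_rw [hH.iff_iff_mem_iff_mem hA hB hP x]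
  by_cases hx : x ∈ A
  · obtain ⟨y, hy⟩ := hB
    exact ⟨y, by simp [hx, hH.1.mem_right_iff.1 hy]⟩
  · obtain ⟨y, hy⟩ := hA
    exact ⟨y, by simp [hx, hy]⟩

end HamLaceableOn

namespace IsWeld

section Layers

variable {ℓ : ℕ} {W : Type} {G : SimpleGraph (Fin ℓ × W)} {Gs : Fin ℓ → SimpleGraph W}

def layer (hG : IsWeld G Gs) (i : Fin ℓ) : Gs i ↪g G where
  toFun := Prod.mk i
  inj' := Prod.mk_right_injective i
  map_rel_iff' := hG.1 i _ _

theorem exists_adj (hG : IsWeld G Gs) {i j : Fin ℓ} (hij : i ≠ j) (a : W) :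
    ∃ b, G.Adj (i, a) (j, b) :=
  let ⟨f, hf⟩ := hG.2 i j hij
  ⟨f a, (hf a (f a)).2 rfl⟩

theorem mem_iff_of_adj (hG : IsWeld G Gs) {V1 V2 : Finset (Fin ℓ × W)}
    (hb : IsBipartition G V1 V2) (i : Fin ℓ) ⦃a b : W⦄ (h : (Gs i).Adj a b) :
    (i, a) ∈ V1 ↔ (i, b) ∉ V1 :=
  hb.mem_left_iff_of_adj ((hG.1 i a b).2 h)

def joinWalk (hG : IsWeld G Gs) {i j : Fin ℓ} {a x y b : W} (p : (Gs i).Walk a x)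
    (h : G.Adj (i, x) (j, y)) (q : (Gs j).Walk y b) : G.Walk (i, a) (j, b) :=
  (p.map (hG.layer i).toHom).append (.cons h (q.map (hG.layer j).toHom))

variable (hG : IsWeld G Gs) {i j : Fin ℓ} {a x y b : W} {p : (Gs i).Walk a x}
  {h : G.Adj (i, x) (j, y)} {q : (Gs j).Walk y b}

theorem mem_support_joinWalk {m : Fin ℓ} {w : W} :
    (m, w) ∈ (hG.joinWalk p h q).support ↔ m = i ∧ w ∈ p.support ∨ m = j ∧ w ∈ q.support := by
  simp [joinWalk, Walk.support_append, layer, eq_comm, and_comm]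

theorem isPath_joinWalk (hij : i ≠ j) (hp : p.IsPath) (hq : q.IsPath) :
    (hG.joinWalk p h q).IsPath := by
  refine Walk.isPath_append_cons (hp.map (hG.layer i).injective) (hq.map (hG.layer j).injective)
    h ?_
  simp [layer, hij.symm]

end Layers

section TwoLayers

variable {W : Type} {G : SimpleGraph (Fin 2 × W)} {Gs : Fin 2 → SimpleGraph W}
  {V1 V2 : Finset (Fin 2 × W)} (hG : IsWeld G Gs) (hb : IsBipartition G V1 V2)
  (hlace : ∀ m x y, ¬((m, x) ∈ V1 ↔ (m, y) ∈ V1) → ∃ p : (Gs m).Walk x y, IsHamPath p)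
include hG hb hlace

theorem exists_isHamPath_of_ne {i j : Fin 2} (hij : i ≠ j) {a x b : W}
    (hax : ¬((i, a) ∈ V1 ↔ (i, x) ∈ V1)) (hab : ¬((i, a) ∈ V1 ↔ (j, b) ∈ V1)) :
    ∃ p : G.Walk (i, a) (j, b), IsHamPath p := by
  obtain ⟨p, hp⟩ := hlace i a x hax
  obtain ⟨y, hxy⟩ := hG.exists_adj hij x
  obtain ⟨q, hq⟩ := hlace j y b (by have := hb.mem_left_iff_of_adj hxy; tauto)
  refine ⟨hG.joinWalk p hxy q, hG.isPath_joinWalk hij hp.1 hq.1, fun ⟨m, w⟩ => ?_⟩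
  rw [hG.mem_support_joinWalk]
  rcases Fin.two_eq_or_eq_of_ne hij m with rfl | rfl
  · exact .inl ⟨rfl, hp.2 w⟩
  · exact .inr ⟨rfl, hq.2 w⟩

theorem exists_isHamPath_of_eq {i : Fin 2} {a b : W} (hab : ¬((i, a) ∈ V1 ↔ (i, b) ∈ V1)) :
    ∃ p : G.Walk (i, a) (i, b), IsHamPath p := by
  obtain ⟨k, hki⟩ := exists_ne i
  obtain ⟨p, hp⟩ := hlace i a b hab
  cases p with
  | nil => exact absurd Iff.rfl hab
  | @cons _ c _ hac q =>
    obtain ⟨a', ha⟩ := hG.exists_adj hki.symm a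
    obtain ⟨c', hc⟩ := hG.exists_adj hki.symm c
    obtain ⟨r, hr⟩ := hlace k a' c' (by
      have := hb.mem_left_iff_of_adj ha
      have := hb.mem_left_iff_of_adj hc
      have := hG.mem_iff_of_adj hb i hac
      tauto)
    obtain ⟨hq, haq⟩ := (Walk.cons_isPath_iff hac q).1 hp.1
    refine ⟨.cons ha (hG.joinWalk r hc.symm q), (hG.isPath_joinWalk hki hr.1 hq).cons ?_,
      fun ⟨m, w⟩ => ?_⟩
    · simp [hG.mem_support_joinWalk, hki.symm, haq]
    · have hw := hp.2 w
      rw [Walk.support_cons, List.mem_cons] at hw ⊢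
      rw [hG.mem_support_joinWalk]
      rcases Fin.two_eq_or_eq_of_ne hki m with rfl | rfl
      · exact .inr (.inl ⟨rfl, hr.2 w⟩)
      · rcases hw with rfl | hw
        · exact .inl rfl
        · exact .inr (.inr ⟨rfl, hw⟩)

end TwoLayers

end IsWeld

theorem stmt9_general {W : Type} (Gs : Fin 2 → SimpleGraph W)
    (hlace : ∀ i, ∃ A B : Finset W, HamLaceableOn (Gs i) A B ∧ A.card = B.card)
    (G : SimpleGraph (Fin 2 × W)) (hweld : IsWeld G Gs)
    (hbip : ∃ V1 V2 : Finset (Fin 2 × W), IsBipartition G V1 V2) :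
    HamLaceable G := by
  obtain ⟨V1, V2, hb⟩ := hbip
  refine ⟨V1, V2, hb, fun ⟨i, a⟩ hu ⟨j, b⟩ hv => ?_⟩
  have : Nonempty W := ⟨a⟩
  choose A B hAB hcard using hlace
  have hne m := (hAB m).nonempty_of_card_eq (hcard m)
  have hflip := hweld.mem_iff_of_adj hb
  have hlayer m x y :=
    (hAB m).exists_isHamPath_of_not_iff (hne m).1 (hne m).2 (hflip m) (x := x) (y := y)
  have hab : ¬((i, a) ∈ V1 ↔ (j, b) ∈ V1) := fun h => hb.mem_right_iff.1 hv (h.1 hu)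
  rcases eq_or_ne i j with rfl | hij
  · exact hweld.exists_isHamPath_of_eq hb hlayer hab
  · obtain ⟨x, hax⟩ := (hAB i).exists_not_iff (hne i).1 (hne i).2 (hflip i) a
    exact hweld.exists_isHamPath_of_ne hb hlayer hij hax hab

theorem stmt9 {W : Type} [Fintype W] [DecidableEq W] (Gs : Fin 2 → SimpleGraph W)
    (hlace : ∀ i, ∃ A B : Finset W, HamLaceableOn (Gs i) A B ∧ A.card = B.card)
    (G : SimpleGraph (Fin 2 × W)) (hweld : IsWeld G Gs)
    (hbip : ∃ V1 V2 : Finset (Fin 2 × W), IsBipartition G V1 V2) :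
    HamLaceable G :=
  stmt9_general Gs hlace G hweld hbip
end
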